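/- Let a_1,...,a_K, b_1,...,b_{K+1} be positive integers with Σ a_k = Σ b_l, and define f(x) = Σ_{k=1}^K floor(a_k x) - Σ_{l=1}^{K+1} floor(b_l x). Then f(x) ∈ {0, 1} for all real x if and only if u_n = (a_1 n)!···(a_K n)! / ((b_1 n)!···(b_{K+1} n)!) is an integer for all natural numbers n. -/

import Mathlib

/-!
Legendre's formula writes `v_p (∏ (a k * n)! / ∏ (b l * n)!)` as `∑_{j ≥ 1} f (n / p ^ j)`,
so `f ≥ 0` gives integrality. Conversely, for a prime `p` larger than all `a k`, `b l` and for
`N < p` only the term `j = 1` survives, so integrality gives `f (N / p) ≥ 0`; since `f` is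
1-periodic (as `∑ a = ∑ b`) and constant on a right neighbourhood of each point, such points
`N / p` see every value of `f`.
Off the jumps of `f`, `⌊-y⌋ = -⌊y⌋ - 1` gives `f (-t) + f t = (K + 1) - K = 1`, so `f ≥ 0`
forces `f ∈ {0, 1}`.
-/

open Finset Filter Topology Nat

theorem Int.floor_neg_of_notMem_range {R : Type*} [Ring R] [LinearOrder R] [FloorRing R]
    [IsOrderedRing R] {a : R} (ha : a ∉ Set.range Int.cast) :
    ⌊-a⌋ = -⌊a⌋ - 1 := by
  rw [Int.floor_neg, (Int.ceil_eq_floor_add_one_iff_notMem a).mpr ha]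
  ring

theorem floor_natCast_mul_div_natCast {K : Type*} [Field K] [LinearOrder K] [IsOrderedRing K]
    [FloorRing K] (c n d : ℕ) : ⌊(c : K) * (n / d)⌋ = ((c * n / d : ℕ) : ℤ) := by
  rw [← mul_div_assoc, ← Nat.cast_mul, Int.floor_div_natCast, Int.floor_natCast]
  push_cast
  rfl

theorem eventually_floor_mul_eq {c : ℝ} (hc : 0 ≤ c) (x : ℝ) :
    ∀ᶠ t in 𝓝[≥] x, ⌊c * t⌋ = ⌊c * x⌋ := by
  have hlt : ∀ᶠ t in 𝓝 x, c * t < ⌊c * x⌋ + 1 :=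
    (continuous_const_mul c).continuousAt.eventually_lt continuousAt_const
      (Int.lt_floor_add_one _)
  filter_upwards [self_mem_nhdsWithin, nhdsWithin_le_nhds hlt] with t (hxt : x ≤ t) ht
  rw [Int.floor_eq_iff]
  exact ⟨(Int.floor_le _).trans (by gcongr), ht⟩

theorem eventually_mul_notMem_range_intCast {c : ℝ} (hc : 0 < c) (x : ℝ) :
    ∀ᶠ t in 𝓝[>] x, c * t ∉ Set.range Int.cast := by
  filter_upwards [self_mem_nhdsWithin,
    nhdsWithin_mono x Set.Ioi_subset_Ici_self (eventually_floor_mul_eq hc.le x)]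
    with t (hxt : x < t) ht
  rw [← Int.floor_lt_self_iff, ht]
  exact (Int.floor_le _).trans_lt (by gcongr)

theorem exists_natCast_div_mem_Ico {y u : ℝ} (hy : 0 ≤ y) (hyu : y < u) :
    ∀ᶠ p : ℕ in atTop, ∃ N : ℕ, (N / p : ℝ) ∈ Set.Ico y u := by
  filter_upwards [tendsto_natCast_atTop_atTop.eventually_gt_atTop (u - y)⁻¹]
    with p hp
  have hp0 : (0 : ℝ) < p := (inv_pos.mpr (sub_pos.mpr hyu)).trans hp
  refine ⟨⌈p * y⌉₊, ?_, ?_⟩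
  · rw [le_div_iff₀ hp0, mul_comm]
    exact Nat.le_ceil _
  · rw [div_lt_iff₀ hp0]
    have := Nat.ceil_lt_add_one (mul_nonneg hp0.le hy)
    have := (inv_lt_iff_one_lt_mul₀ (sub_pos.mpr hyu)).mp hp
    nlinarith

theorem factorization_prod_factorial {ι : Type*} [Fintype ι] (c : ι → ℕ) {p B : ℕ}
    (hp : p.Prime) (hB : ∀ i, c i < p ^ B) :
    (∏ i, (c i)!).factorization p = ∑ j ∈ Ico 1 B, ∑ i, c i / p ^ j := by
  have : Fact p.Prime := ⟨hp⟩
  rw [Nat.factorization_prod fun i _ => (factorial_pos _).ne', Finsupp.finsetSum_apply,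
    Finset.sum_comm]
  refine Finset.sum_congr rfl fun i _ => ?_
  rcases (c i).eq_zero_or_pos with h | h
  · simp [h]
  · rw [Nat.factorization_def _ hp, padicValNat_factorial (Nat.log_lt_of_lt_pow h.ne' (hB i))]

/-- The function `f` of Landau's criterion. -/
noncomputable def landauFun {ι κ : Type*} [Fintype ι] [Fintype κ]
    (a : ι → ℕ) (b : κ → ℕ) (x : ℝ) : ℤ :=
  ∑ k, ⌊(a k : ℝ) * x⌋ - ∑ l, ⌊(b l : ℝ) * x⌋

section Landau

variable {ι κ : Type*} [Fintype ι] [Fintype κ] (a : ι → ℕ) (b : κ → ℕ)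

theorem landauFun_natCast_div (n d : ℕ) :
    landauFun a b (n / d) =
      ∑ k, ((a k * n / d : ℕ) : ℤ) - ∑ l, ((b l * n / d : ℕ) : ℤ) := by
  simp only [landauFun, floor_natCast_mul_div_natCast]

theorem landauFun_add_intCast (hsum : ∑ k, a k = ∑ l, b l) (x : ℝ) (m : ℤ) :
    landauFun a b (x + m) = landauFun a b x := by
  have hfloor (c : ℕ) : ⌊(c : ℝ) * (x + m)⌋ = ⌊(c : ℝ) * x⌋ + c * m := by
    rw [mul_add, ← Int.cast_natCast c, ← Int.cast_mul, Int.floor_add_intCast]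
  have hsum' : ∑ k, (a k : ℤ) * m = ∑ l, (b l : ℤ) * m := by
    simp only [← Finset.sum_mul]
    exact_mod_cast congrArg (fun s : ℕ => (s : ℤ) * m) hsum
  simp only [landauFun, hfloor, Finset.sum_add_distrib, hsum']
  ring

theorem eventually_landauFun_eq (x : ℝ) :
    ∀ᶠ t in 𝓝[≥] x, landauFun a b t = landauFun a b x := by
  have ha := Filter.eventually_all.mpr fun k => eventually_floor_mul_eq (a k).cast_nonneg x
  have hb := Filter.eventually_all.mpr fun l => eventually_floor_mul_eq (b l).cast_nonneg x
  filter_upwards [ha, hb] with t hat hbt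
  simp only [landauFun, hat, hbt]

theorem landauFun_neg_add {t : ℝ} (ha : ∀ k, (a k : ℝ) * t ∉ Set.range Int.cast)
    (hb : ∀ l, (b l : ℝ) * t ∉ Set.range Int.cast) :
    landauFun a b (-t) + landauFun a b t = Fintype.card κ - Fintype.card ι := by
  simp only [landauFun, mul_neg, Int.floor_neg_of_notMem_range (ha _),
    Int.floor_neg_of_notMem_range (hb _), Finset.sum_sub_distrib, Finset.sum_neg_distrib,
    Finset.sum_const, Finset.card_univ, nsmul_eq_mul, mul_one]
  ring

theorem eventually_landauFun_neg_add (ha : ∀ k, 0 < a k) (hb : ∀ l, 0 < b l) (x : ℝ) :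
    ∀ᶠ t in 𝓝[>] x,
      landauFun a b (-t) + landauFun a b t = Fintype.card κ - Fintype.card ι := by
  have ha' := Filter.eventually_all.mpr fun k =>
    eventually_mul_notMem_range_intCast (Nat.cast_pos.mpr (ha k)) x
  have hb' := Filter.eventually_all.mpr fun l =>
    eventually_mul_notMem_range_intCast (Nat.cast_pos.mpr (hb l)) x
  filter_upwards [ha', hb'] with t hat hbt
  exact landauFun_neg_add a b hat hbt

theorem prod_factorial_dvd_of_landauFun_nonneg (hf : ∀ x, 0 ≤ landauFun a b x) (n : ℕ) :
    ∏ l, (b l * n)! ∣ ∏ k, (a k * n)! := by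
  refine (Nat.factorization_prime_le_iff_dvd (by positivity) (by positivity)).mp fun p hp => ?_
  set M := ∑ k, a k * n + ∑ l, b l * n
  have hM {m : ℕ} (hm : m ≤ M) : m < p ^ M :=
    (Nat.lt_pow_self hp.one_lt).trans_le (Nat.pow_le_pow_right hp.pos hm)
  have haM (k : ι) : a k * n ≤ M :=
    (single_le_sum (f := (a · * n)) (fun _ _ => Nat.zero_le _) (mem_univ k)).trans le_self_add
  have hbM (l : κ) : b l * n ≤ M :=
    (single_le_sum (f := (b · * n)) (fun _ _ => Nat.zero_le _) (mem_univ l)).trans le_add_self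
  rw [factorization_prod_factorial _ hp fun l => hM (hbM l),
    factorization_prod_factorial _ hp fun k => hM (haM k)]
  refine Finset.sum_le_sum fun j _ => ?_
  have hj := hf (n / (p ^ j : ℕ))
  rw [landauFun_natCast_div, sub_nonneg] at hj
  exact_mod_cast hj

theorem landauFun_natCast_div_prime_nonneg {p N : ℕ} (hp : p.Prime) (hap : ∀ k, a k < p)
    (hbp : ∀ l, b l < p) (hN : N < p) (hd : ∏ l, (b l * N)! ∣ ∏ k, (a k * N)!) :
    0 ≤ landauFun a b (N / p) := by
  have hlt {c : ℕ} (hc : c < p) : c * N < p ^ 2 := sq p ▸ Nat.mul_lt_mul'' hc hN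
  have hv := (Nat.factorization_prime_le_iff_dvd (by positivity) (by positivity)).mpr hd p hp
  rw [factorization_prod_factorial _ hp fun l => hlt (hbp l),
    factorization_prod_factorial _ hp fun k => hlt (hap k)] at hv
  simp only [show Ico 1 2 = {1} from rfl, sum_singleton, pow_one] at hv
  rw [landauFun_natCast_div, sub_nonneg]
  exact_mod_cast hv

theorem landauFun_nonneg_of_prod_factorial_dvd (hsum : ∑ k, a k = ∑ l, b l)
    (hd : ∀ n, ∏ l, (b l * n)! ∣ ∏ k, (a k * n)!) (x : ℝ) : 0 ≤ landauFun a b x := by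
  rw [← Int.fract_add_floor x, landauFun_add_intCast a b hsum]
  obtain ⟨u, hyu, hu⟩ := mem_nhdsGE_iff_exists_Ico_subset.mp <|
    (eventually_landauFun_eq a b (Int.fract x)).and
      (nhdsWithin_le_nhds (eventually_lt_nhds (Int.fract_lt_one x)))
  obtain ⟨P, hP⟩ := Filter.eventually_atTop.mp <|
    (exists_natCast_div_mem_Ico (Int.fract_nonneg x) hyu).and (eventually_gt_atTop (∑ k, a k))
  obtain ⟨p, hPp, hp⟩ := Nat.exists_infinite_primes P
  obtain ⟨⟨N, hN⟩, hap⟩ := hP p hPp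
  obtain ⟨hfN, hN1⟩ := hu hN
  rw [← hfN]
  refine landauFun_natCast_div_prime_nonneg a b hp
    (fun k => (single_le_sum (fun _ _ => Nat.zero_le _) (mem_univ k)).trans_lt hap)
    (fun l => (single_le_sum (fun _ _ => Nat.zero_le _) (mem_univ l)).trans_lt (hsum ▸ hap))
    ?_ (hd N)
  rwa [div_lt_one (by exact_mod_cast hp.pos), Nat.cast_lt] at hN1

theorem landauFun_nonneg_iff_prod_factorial_dvd (hsum : ∑ k, a k = ∑ l, b l) :
    (∀ x, 0 ≤ landauFun a b x) ↔ ∀ n, ∏ l, (b l * n)! ∣ ∏ k, (a k * n)! :=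
  ⟨prod_factorial_dvd_of_landauFun_nonneg a b, landauFun_nonneg_of_prod_factorial_dvd a b hsum⟩

theorem landauFun_eq_zero_or_one_iff_nonneg (ha : ∀ k, 0 < a k) (hb : ∀ l, 0 < b l)
    (hcard : Fintype.card κ = Fintype.card ι + 1) :
    (∀ x, landauFun a b x = 0 ∨ landauFun a b x = 1) ↔ ∀ x, 0 ≤ landauFun a b x := by
  refine ⟨fun h x => by rcases h x with h | h <;> omega, fun h x => ?_⟩
  obtain ⟨t, ht_eq, ht_sym⟩ :=
    (((eventually_landauFun_eq a b x).filter_mono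
      (nhdsWithin_mono x Set.Ioi_subset_Ici_self)).and
        (eventually_landauFun_neg_add a b ha hb x)).exists
  rw [hcard, Nat.cast_add_one] at ht_sym
  have := h t
  have := h (-t)
  omega

end Landau

theorem stmt_17 (K : ℕ) (a : Fin K → ℕ) (b : Fin (K + 1) → ℕ)
    (ha : ∀ k, 0 < a k) (hb : ∀ l, 0 < b l)
    (hsum : (∑ k, a k) = (∑ l, b l)) :
    (∀ x : ℝ, (∑ k, ⌊(a k : ℝ) * x⌋) - (∑ l, ⌊(b l : ℝ) * x⌋) = 0 ∨
              (∑ k, ⌊(a k : ℝ) * x⌋) - (∑ l, ⌊(b l : ℝ) * x⌋) = 1) ↔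
    (∀ n : ℕ, (∏ l, Nat.factorial (b l * n)) ∣ (∏ k, Nat.factorial (a k * n))) :=
  (landauFun_eq_zero_or_one_iff_nonneg a b ha hb (by simp)).trans
    (landauFun_nonneg_iff_prod_factorial_dvd a b hsum)
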